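/- arXiv:0910.4675 — 2 statements merged into one kernel-verified Lean document; each statement's English description precedes it below -/
import Mathlib

section
/- Let x_1,...,x_n be variables and for α ∈ ℤ^n write x^α = x_1^{α_1}···x_n^{α_n}. Let α_1,...,α_k ∈ ℤ^n with ∑_i α_i ≠ 0. Then, as rational functions, ∏_{i=1}^k 1/(1-x^{α_i}) = (1/(1-x^{∑α_i})) · ∑_{j=1}^k [ (x^{α_1}···x^{α_{j-1}}) / ((1-x^{α_1})···(1-x^{α_{j-1}})) · 1/((1-x^{α_{j+1}})···(1-x^{α_k})) ]. -/
open Finset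

/-- The field of rational functions `ℚ(x₁, ..., xₙ)`. -/
noncomputable abbrev RatFn (n : ℕ) : Type := FractionRing (MvPolynomial (Fin n) ℚ)

/-- The Laurent monomial `x^α = x₁^{α₁} ⋯ xₙ^{αₙ}` for `α ∈ ℤⁿ`. -/
noncomputable def xm {n : ℕ} (α : Fin n → ℤ) : RatFn n :=
  ∏ i, (algebraMap (MvPolynomial (Fin n) ℚ) (RatFn n) (MvPolynomial.X i)) ^ (α i)

/-!
Write `aᵢ = x^{αᵢ}`. Splitting `∏ᵢ (1 - aᵢ)⁻¹` at the index `j`, the `j`-th summand equals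
`(∏_{i<j} aᵢ) (1 - aⱼ) ∏ᵢ (1 - aᵢ)⁻¹`, and the sum over `j` of `(∏_{i<j} aᵢ) (1 - aⱼ)`
telescopes to `1 - ∏ᵢ aᵢ = 1 - x^{∑ αᵢ}`. The identity thus holds for any elements `aᵢ` of a
field indexed by a finite linear order.
-/

section Telescoping

variable {ι F : Type*} [LinearOrder ι] [Fintype ι]

lemma sum_prod_lt_mul_one_sub_eq_one_sub_prod [CommRing F] (a : ι → F) :
    ∑ j, (∏ i with i < j, a i) * (1 - a j) = 1 - ∏ i, a i := by
  have := prod_one_sub_ordered univ (fun i => 1 - a i)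
  simp only [sub_sub_cancel] at this
  rw [this, sub_sub_cancel]
  exact sum_congr rfl fun j _ => mul_comm _ _

lemma prod_lt_mul_self_mul_prod_gt [CommMonoid F] (f : ι → F) (j : ι) :
    (∏ i with i < j, f i) * f j * ∏ i with j < i, f i = ∏ i, f i := by
  have hge : univ.filter (fun i => ¬i < j) = insert j (univ.filter (j < ·)) := by
    ext i
    simp only [mem_filter, mem_univ, true_and, mem_insert, not_lt]
    exact le_iff_eq_or_lt.trans (or_congr eq_comm Iff.rfl)
  rw [← prod_filter_mul_prod_filter_not univ (· < j), hge,
    prod_insert (by simp), mul_assoc]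

lemma prod_lt_mul_prod_gt_eq_mul_prod_inv_one_sub [Field F] (a : ι → F)
    (h : ∀ i, 1 - a i ≠ 0) (j : ι) :
    (∏ i with i < j, a i * (1 - a i)⁻¹) * ∏ i with j < i, (1 - a i)⁻¹ =
      (∏ i with i < j, a i) * (1 - a j) * ∏ i, (1 - a i)⁻¹ := by
  rw [← prod_lt_mul_self_mul_prod_gt (fun i => (1 - a i)⁻¹) j, prod_mul_distrib]
  field_simp [h j]

theorem prod_inv_one_sub_eq [Field F] (a : ι → F) (h : ∀ i, 1 - a i ≠ 0)
    (hprod : 1 - ∏ i, a i ≠ 0) :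
    ∏ i, (1 - a i)⁻¹ = (1 - ∏ i, a i)⁻¹ *
      ∑ j, (∏ i with i < j, a i * (1 - a i)⁻¹) * ∏ i with j < i, (1 - a i)⁻¹ := by
  simp only [prod_lt_mul_prod_gt_eq_mul_prod_inv_one_sub a h, ← sum_mul, sum_prod_lt_mul_one_sub_eq_one_sub_prod]
  rw [inv_mul_cancel_left₀ hprod]

end Telescoping

lemma xm_zero (n : ℕ) : xm (0 : Fin n → ℤ) = 1 := by
  simp [xm]

lemma xm_add {n : ℕ} (α β : Fin n → ℤ) : xm (α + β) = xm α * xm β := by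
  simp only [xm, Pi.add_apply, ← prod_mul_distrib]
  refine prod_congr rfl fun q _ => zpow_add₀ ?_ _ _
  exact (map_ne_zero_iff _ (IsFractionRing.injective _ _)).mpr (MvPolynomial.X_ne_zero q)

lemma xm_sum {n : ℕ} {κ : Type*} (s : Finset κ) (α : κ → Fin n → ℤ) :
    xm (∑ i ∈ s, α i) = ∏ i ∈ s, xm (α i) := by
  classical
  induction s using Finset.induction_on with
  | empty => exact xm_zero n
  | insert a s ha ih => rw [sum_insert ha, prod_insert ha, xm_add, ih]

theorem szenes_vergne_general (n k : ℕ) (α : Fin k → Fin n → ℤ)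
    (hne : ∀ i, (1 : RatFn n) - xm (α i) ≠ 0)
    (hsum : (1 : RatFn n) - xm (∑ i, α i) ≠ 0) :
    ∏ i, ((1 : RatFn n) - xm (α i))⁻¹ =
      ((1 : RatFn n) - xm (∑ i, α i))⁻¹ *
        ∑ j, (∏ i ∈ Finset.univ.filter (fun i => i < j),
                xm (α i) * ((1 : RatFn n) - xm (α i))⁻¹) *
             (∏ i ∈ Finset.univ.filter (fun i => j < i),
                ((1 : RatFn n) - xm (α i))⁻¹) := by
  rw [xm_sum] at hsum ⊢
  exact prod_inv_one_sub_eq (fun i => xm (α i)) hne hsum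

/-- The Szenes–Vergne formula. -/
theorem szenes_vergne (n k : ℕ) (α : Fin k → Fin n → ℤ)
    (hα : ∀ i, α i ≠ 0) (hS : (∑ i, α i) ≠ 0)
    (hne : ∀ i, (1 : RatFn n) - xm (α i) ≠ 0)
    (hsum : (1 : RatFn n) - xm (∑ i, α i) ≠ 0) :
    ∏ i, ((1 : RatFn n) - xm (α i))⁻¹ =
      ((1 : RatFn n) - xm (∑ i, α i))⁻¹ *
        ∑ j, (∏ i ∈ Finset.univ.filter (fun i => i < j),
                xm (α i) * ((1 : RatFn n) - xm (α i))⁻¹) *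
             (∏ i ∈ Finset.univ.filter (fun i => j < i),
                ((1 : RatFn n) - xm (α i))⁻¹) :=
  szenes_vergne_general n k α hne hsum
end

section
/- Let α, β ∈ ℤ^n be nonzero with α ≠ 2β. Then 1/((1-x^α)(1-x^β)) = (1/(1-x^{α-2β})) · ( 1/(1-x^β) - (x^{α-β} + x^{α-2β})/(1-x^α) ) as rational functions. -/
open Finset

/-- With `a = x^{α-2β}` and `b = x^β` the theorem is this identity: the numerator
`(1 - a b²) - a (1 + b) (1 - b)` collapses to `1 - a`. -/
theorem inv_one_sub_mul_sq_mul_inv_one_sub {K : Type*} [Field K] {a b : K}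
    (hab : 1 - a * b ^ 2 ≠ 0) (hb : 1 - b ≠ 0) (ha : 1 - a ≠ 0) :
    ((1 - a * b ^ 2) * (1 - b))⁻¹ = (1 - a)⁻¹ * ((1 - b)⁻¹ - (a * b + a) * (1 - a * b ^ 2)⁻¹) := by
  field_simp
  ring

namespace RatFn

theorem algebraMap_X_ne_zero {n : ℕ} (i : Fin n) :
    algebraMap (MvPolynomial (Fin n) ℚ) (RatFn n) (MvPolynomial.X i) ≠ 0 :=
  (map_ne_zero_iff _ (IsFractionRing.injective _ _)).mpr (MvPolynomial.X_ne_zero i)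

theorem xm_add {n : ℕ} (α β : Fin n → ℤ) : xm (α + β) = xm α * xm β := by
  simp only [xm, ← prod_mul_distrib, Pi.add_apply, zpow_add₀ (algebraMap_X_ne_zero _)]

end RatFn

theorem two_factor_decomposition'_general (n : ℕ) (α β : Fin n → ℤ)
    (h1 : (1 : RatFn n) - xm α ≠ 0) (h2 : (1 : RatFn n) - xm β ≠ 0)
    (h3 : (1 : RatFn n) - xm (α - (2 : ℤ) • β) ≠ 0) :
    (((1 : RatFn n) - xm α) * ((1 : RatFn n) - xm β))⁻¹ =
      ((1 : RatFn n) - xm (α - (2 : ℤ) • β))⁻¹ *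
        (((1 : RatFn n) - xm β)⁻¹ -
          (xm (α - β) + xm (α - (2 : ℤ) • β)) * ((1 : RatFn n) - xm α)⁻¹) := by
  have hxα : xm α = xm (α - (2 : ℤ) • β) * xm β ^ 2 := by
    rw [sq, ← mul_assoc, ← RatFn.xm_add, ← RatFn.xm_add]
    congr 1
    module
  have hxαβ : xm (α - β) = xm (α - (2 : ℤ) • β) * xm β := by
    rw [← RatFn.xm_add]
    congr 1
    module
  rw [hxα] at h1 ⊢
  rw [hxαβ]
  exact inv_one_sub_mul_sq_mul_inv_one_sub h1 h2 h3

/-- Lemma (d), second formula. -/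
theorem two_factor_decomposition' (n : ℕ) (α β : Fin n → ℤ)
    (hα : α ≠ 0) (hβ : β ≠ 0) (hαβ : α ≠ (2 : ℤ) • β)
    (h1 : (1 : RatFn n) - xm α ≠ 0) (h2 : (1 : RatFn n) - xm β ≠ 0)
    (h3 : (1 : RatFn n) - xm (α - (2 : ℤ) • β) ≠ 0) :
    (((1 : RatFn n) - xm α) * ((1 : RatFn n) - xm β))⁻¹ =
      ((1 : RatFn n) - xm (α - (2 : ℤ) • β))⁻¹ *
        (((1 : RatFn n) - xm β)⁻¹ -
          (xm (α - β) + xm (α - (2 : ℤ) • β)) * ((1 : RatFn n) - xm α)⁻¹) :=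
  two_factor_decomposition'_general n α β h1 h2 h3
end
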